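/- arXiv:2011.03342 — 2 statements merged into one kernel-verified Lean document; each statement's English description precedes it below -/
import Mathlib

section
/- For PSD operators A₁ and A₂ on a finite-dimensional Hilbert space, the minimum over operators T with 0 ≤ T ≤ I of Tr(A₁(I−T)) + Tr(A₂T) equals ½(Tr A₁ + Tr A₂ − ‖A₁ − A₂‖₁), where ‖·‖₁ is the trace norm. -/
/-!
The objective equals `Tr A₁ - Tr (Δ T)` with `Δ = A₁ - A₂` Hermitian, so one has to maximise
`Tr (Δ T)` over `0 ≤ T ≤ 1`. In an eigenbasis of `Δ` this is `∑ λᵢ sᵢ`, where the `sᵢ` are the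
diagonal entries of the conjugated `T` and hence lie in `[0, 1]`. So the maximum is `∑ λᵢ⁺`,
attained by the projection onto the nonnegative eigenspaces of `Δ`, and
`2 ∑ λᵢ⁺ = Tr Δ + ‖Δ‖₁`.
-/

open Matrix ComplexOrder
open scoped MatrixOrder

theorem mul_le_posPart_of_mem_Icc {a s : ℝ} (hs : s ∈ Set.Icc 0 1) : a * s ≤ a⁺ := by
  rcases le_total 0 a with ha | ha
  · exact (mul_le_of_le_one_right ha hs.2).trans (le_posPart a)
  · exact (mul_nonpos_of_nonpos_of_nonneg ha hs.1).trans (posPart_nonneg a)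

namespace Matrix

variable {n 𝕜 : Type*} [DecidableEq n] [RCLike 𝕜]

theorem diagonal_mem_Icc {d : n → 𝕜} (hd : ∀ i, d i ∈ Set.Icc 0 1) :
    diagonal d ∈ Set.Icc 0 1 := by
  refine ⟨nonneg_iff_posSemidef.mpr (posSemidef_diagonal_iff.mpr fun i ↦ (hd i).1), ?_⟩
  rw [le_iff, ← diagonal_one, diagonal_sub, posSemidef_diagonal_iff]
  exact fun i ↦ sub_nonneg.mpr (hd i).2

theorem diag_mem_Icc_of_mem_Icc {T : Matrix n n 𝕜} (hT : T ∈ Set.Icc 0 1) (i : n) :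
    T i i ∈ Set.Icc 0 1 := by
  have h1 : 0 ≤ (1 - T) i i := (le_iff.mp hT.2).diag_nonneg
  rw [sub_apply, one_apply_eq, sub_nonneg] at h1
  exact ⟨(nonneg_iff_posSemidef.mp hT.1).diag_nonneg, h1⟩

variable [Fintype n]

theorem trace_mul_one_sub_add_trace_mul {R : Type*} [CommRing R] (A B T : Matrix n n R) :
    (A * (1 - T)).trace + (B * T).trace = A.trace - ((A - B) * T).trace := by
  rw [mul_sub, mul_one, sub_mul, trace_sub, trace_sub]
  abel

theorem star_mul_mul_mem_Icc {T : Matrix n n 𝕜} (hT : T ∈ Set.Icc 0 1)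
    (U : unitaryGroup n 𝕜) : star (U : Matrix n n 𝕜) * T * U ∈ Set.Icc 0 1 := by
  rw [← Unitary.conjStarAlgAut_star_apply (S := 𝕜)]
  exact ⟨map_zero (Unitary.conjStarAlgAut 𝕜 _ (star U)) ▸ OrderHomClass.mono _ hT.1,
    map_one (Unitary.conjStarAlgAut 𝕜 _ (star U)) ▸ OrderHomClass.mono _ hT.2⟩

theorem IsHermitian.trace_mul_eq_sum_eigenvalues_mul {A : Matrix n n 𝕜} (hA : A.IsHermitian)
    (T : Matrix n n 𝕜) :
    (A * T).trace = ∑ i, (hA.eigenvalues i : 𝕜) *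
      (star (hA.eigenvectorUnitary : Matrix n n 𝕜) * T * hA.eigenvectorUnitary) i i := by
  conv_lhs => rw [hA.spectral_theorem, Unitary.conjStarAlgAut_apply]
  rw [mul_assoc, mul_assoc, trace_mul_comm, mul_assoc]
  simp [trace, diagonal_mul]

theorem IsHermitian.re_trace_mul_le_sum_posPart_eigenvalues {A T : Matrix n n 𝕜}
    (hA : A.IsHermitian) (hT : T ∈ Set.Icc 0 1) :
    RCLike.re (A * T).trace ≤ ∑ i, (hA.eigenvalues i)⁺ := by
  rw [hA.trace_mul_eq_sum_eigenvalues_mul, map_sum]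
  refine Finset.sum_le_sum fun i _ ↦ ?_
  obtain ⟨h0, h1⟩ := diag_mem_Icc_of_mem_Icc (star_mul_mul_mem_Icc hT hA.eigenvectorUnitary) i
  rw [RCLike.re_ofReal_mul]
  exact mul_le_posPart_of_mem_Icc ⟨RCLike.nonneg_iff.mp h0 |>.1, by
    simpa using (RCLike.le_iff_re_im.mp h1).1⟩

theorem IsHermitian.isGreatest_trace_mul {A : Matrix n n 𝕜} (hA : A.IsHermitian) :
    IsGreatest {x : ℝ | ∃ T ∈ Set.Icc (0 : Matrix n n 𝕜) 1, (A * T).trace = x}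
      (∑ i, (hA.eigenvalues i)⁺) := by
  set u : Matrix n n 𝕜 := hA.eigenvectorUnitary.val
  let d : n → 𝕜 := fun i ↦ if 0 ≤ hA.eigenvalues i then 1 else 0
  have hd : ∀ i, d i ∈ Set.Icc 0 1 := fun i ↦ by by_cases h : 0 ≤ hA.eigenvalues i <;> simp [d, h]
  have hP : u * diagonal d * star u ∈ Set.Icc 0 1 := by
    simpa using star_mul_mul_mem_Icc (diagonal_mem_Icc hd) (star hA.eigenvectorUnitary)
  refine ⟨⟨_, hP, ?_⟩, ?_⟩
  · have hconj : star u * (u * diagonal d * star u) * u = diagonal d := by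
      rw [← mul_assoc, ← mul_assoc, Unitary.coe_star_mul_self, one_mul, mul_assoc,
        Unitary.coe_star_mul_self, mul_one]
    rw [hA.trace_mul_eq_sum_eigenvalues_mul, hconj]
    push_cast
    refine Finset.sum_congr rfl fun i _ ↦ ?_
    by_cases h : 0 ≤ hA.eigenvalues i
    · simp [d, h]
    · simp [d, h, posPart_eq_zero.mpr (not_le.mp h).le]
  · rintro x ⟨T, hT, hx⟩
    simpa [hx] using hA.re_trace_mul_le_sum_posPart_eigenvalues hT

end Matrix

theorem sum_posPart_eq {ι : Type*} (s : Finset ι) (f : ι → ℝ) :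
    ∑ i ∈ s, (f i)⁺ = (∑ i ∈ s, f i + ∑ i ∈ s, |f i|) / 2 := by
  rw [← Finset.sum_add_distrib, Finset.sum_div]
  refine Finset.sum_congr rfl fun i _ ↦ ?_
  linarith [posPart_add_negPart (f i), posPart_sub_negPart (f i)]

theorem holevo_helstrom_generalized {d : ℕ}
    (A₁ A₂ : Matrix (Fin d) (Fin d) ℂ)
    (hA₁ : A₁.PosSemidef) (hA₂ : A₂.PosSemidef) :
    IsLeast
      {x : ℝ | ∃ T : Matrix (Fin d) (Fin d) ℂ,
        T.PosSemidef ∧ (1 - T).PosSemidef ∧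
        (A₁ * (1 - T)).trace + (A₂ * T).trace = ((x : ℝ) : ℂ)}
      (1 / 2 * (A₁.trace.re + A₂.trace.re
        - ∑ i, |(hA₁.1.sub hA₂.1).eigenvalues i|)) := by
  set hΔ := hA₁.1.sub hA₂.1
  have hA₁_trace : (A₁.trace.re : ℂ) = A₁.trace := by
    rw [hA₁.1.trace_eq_sum_eigenvalues]
    simp
  have hΔ_trace : ∑ i, hΔ.eigenvalues i = A₁.trace.re - A₂.trace.re := by
    simpa [trace_sub] using congrArg Complex.re hΔ.trace_eq_sum_eigenvalues.symm
  have hvalue : 1 / 2 * (A₁.trace.re + A₂.trace.re - ∑ i, |hΔ.eigenvalues i|) =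
      A₁.trace.re - ∑ i, (hΔ.eigenvalues i)⁺ := by
    rw [sum_posPart_eq, hΔ_trace]
    ring
  obtain ⟨⟨T, hT, hT_trace⟩, hbound⟩ := hΔ.isGreatest_trace_mul
  -- the real-to-`𝕜` cast of the general lemma is `algebraMap ℝ ℂ`, not `Complex.ofReal`
  simp only [Complex.coe_algebraMap] at hT_trace hbound
  rw [hvalue]
  refine ⟨⟨T, nonneg_iff_posSemidef.mp hT.1, le_iff.mp hT.2, ?_⟩, ?_⟩
  · rw [trace_mul_one_sub_add_trace_mul, hT_trace]
    push_cast
    rw [hA₁_trace]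
  · rintro x ⟨T, hT₀, hT₁, hx⟩
    rw [trace_mul_one_sub_add_trace_mul] at hx
    have : A₁.trace.re - x ≤ ∑ i, (hΔ.eigenvalues i)⁺ :=
      hbound ⟨T, ⟨hT₀.nonneg, le_iff.mpr hT₁⟩, by push_cast; rw [hA₁_trace]; linear_combination -hx⟩
    linarith
end

section
/- Let p, q, t, s ∈ (0,1) with t + s < 1 and let A(n) be the 3×3 symmetric matrix with entries A₁₁ = tⁿ − pⁿ, A₁₂ = √((ts)ⁿ), A₁₃ = √(tⁿ(1−tⁿ−sⁿ)), A₂₂ = sⁿ + qⁿ, A₂₃ = √(sⁿ(1−tⁿ−sⁿ)), A₃₃ = 1 − tⁿ − sⁿ. Then for all sufficiently large n, A(n) has exactly one negative eigenvalue, and the trace norm satisfies ‖A(n)‖₁ = 1 + pⁿ + qⁿ − 2(pt)ⁿ + o((pt)ⁿ) as n → ∞. -/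
/-!
`A(n) = diag(-P, Q, 0) + v vᵀ` with `P = pⁿ`, `Q = qⁿ` and `v = (√T, √S, √u)`, where `T = tⁿ`,
`S = sⁿ`, `u = 1 - T - S`, so its characteristic polynomial is
`x (x + P) (x - Q) - T x (x - Q) - S x (x + P) - u (x + P) (x - Q)`.
Hence `det A = -u P Q < 0` while `tr A = 1 + Q - P > 0`, which forces exactly one negative
eigenvalue `λ`, and `‖A‖₁ = tr A - 2λ`. With `a = -λ` and `b = Q - λ` the characteristic
equation becomes `P T / (λ + P) = P + P S / b + u P / a`, and `(λ + P) u ≤ T a` bounds the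
right-hand side between `u` and `P + S (u + T) / u + u + T`. Both bounds tend to `1`, so
`λ = -P + P T (1 + o(1))`.
-/

open Matrix ComplexOrder
open Filter Topology

theorem det_scalar_sub_diagonal_add_vecMulVec {R : Type*} [CommRing R] (d v w : Fin 3 → R)
    (x : R) :
    (scalar (Fin 3) x - (diagonal d + vecMulVec v w)).det =
      (x - d 0) * (x - d 1) * (x - d 2) - v 0 * w 0 * (x - d 1) * (x - d 2)
        - v 1 * w 1 * (x - d 0) * (x - d 2) - v 2 * w 2 * (x - d 0) * (x - d 1) := by
  simp only [det_fin_three, scalar_apply, Matrix.sub_apply, Matrix.add_apply, diagonal_apply,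
    vecMulVec_apply]
  simp only [Fin.isValue, if_true, Fin.reduceEq, if_false, zero_add, zero_sub]
  ring

theorem Matrix.IsHermitian.prod_sub_eigenvalues {n : Type*} [Fintype n] [DecidableEq n]
    {A : Matrix n n ℝ} (hA : A.IsHermitian) (x : ℝ) :
    ∏ i, (x - hA.eigenvalues i) = (scalar n x - A).det := by
  rw [← eval_charpoly, hA.charpoly_eq, Polynomial.eval_prod]
  simp

theorem Matrix.IsHermitian.sum_eigenvalues_eq_trace {n : Type*} [Fintype n] [DecidableEq n]
    {A : Matrix n n ℝ} (hA : A.IsHermitian) : ∑ i, hA.eigenvalues i = A.trace := by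
  simpa using hA.trace_eq_sum_eigenvalues.symm

theorem exists_neg_and_pos_of_prod_neg_of_sum_pos {f : Fin 3 → ℝ} (hprod : ∏ i, f i < 0)
    (hsum : 0 < ∑ i, f i) : ∃ i₀, f i₀ < 0 ∧ ∀ j ≠ i₀, 0 < f j := by
  have hne (i : Fin 3) : f i ≠ 0 := fun h => hprod.ne (Finset.prod_eq_zero (Finset.mem_univ i) h)
  rw [Fin.prod_univ_three] at hprod
  rw [Fin.sum_univ_three] at hsum
  rcases (hne 0).lt_or_gt with h0 | h0 <;> rcases (hne 1).lt_or_gt with h1 | h1 <;>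
    rcases (hne 2).lt_or_gt with h2 | h2
  · linarith
  · nlinarith [mul_pos_of_neg_of_neg h0 h1]
  · nlinarith [mul_pos_of_neg_of_neg h0 h2]
  · exact ⟨0, h0, fun j hj => by fin_cases j <;> simp_all⟩
  · nlinarith [mul_pos_of_neg_of_neg h1 h2]
  · exact ⟨1, h1, fun j hj => by fin_cases j <;> simp_all⟩
  · exact ⟨2, h2, fun j hj => by fin_cases j <;> simp_all⟩
  · nlinarith [mul_pos (mul_pos h0 h1) h2]

section SingleNegative

variable {ι : Type*} [Fintype ι] {f : ι → ℝ} {i₀ : ι}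

theorem card_filter_neg_eq_one (hneg : f i₀ < 0) (hpos : ∀ j ≠ i₀, 0 ≤ f j) :
    (Finset.univ.filter (fun i => f i < 0)).card = 1 :=
  Finset.card_eq_one.mpr ⟨i₀, Finset.eq_singleton_iff_unique_mem.mpr
    ⟨by simpa using hneg,
      fun j hj => by_contra fun hji => (hpos j hji).not_gt (by simpa using hj)⟩⟩

theorem sum_abs_eq_sum_sub_two_mul (hneg : f i₀ ≤ 0) (hpos : ∀ j ≠ i₀, 0 ≤ f j) :
    ∑ i, |f i| = ∑ i, f i - 2 * f i₀ := by
  have h : ∑ i, (|f i| - f i) = -2 * f i₀ := by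
    rw [Finset.sum_eq_single i₀ (fun j _ hj => by rw [abs_of_nonneg (hpos j hj), sub_self])
      (by simp), abs_of_nonpos hneg]
    ring
  rw [Finset.sum_sub_distrib] at h
  linarith

end SingleNegative

noncomputable def diagRankOneUpdate (T S u P Q : ℝ) : Matrix (Fin 3) (Fin 3) ℝ :=
  diagonal ![-P, Q, 0] + vecMulVec ![√T, √S, √u] ![√T, √S, √u]

section DiagRankOneUpdate

variable {T S u P Q : ℝ}

theorem diagRankOneUpdate_eq (hT : 0 ≤ T) (hS : 0 ≤ S) (hu : 0 ≤ u) :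
    diagRankOneUpdate T S u P Q =
      !![T - P, √(T * S), √(T * u); √(T * S), S + Q, √(S * u); √(T * u), √(S * u), u] := by
  rw [diagRankOneUpdate, Real.sqrt_mul hT, Real.sqrt_mul hT, Real.sqrt_mul hS]
  ext i j
  fin_cases i <;> fin_cases j <;>
    simp [Real.mul_self_sqrt, hT, hS, hu, mul_comm, sub_eq_neg_add, add_comm]

theorem det_scalar_sub_diagRankOneUpdate (hT : 0 ≤ T) (hS : 0 ≤ S) (hu : 0 ≤ u) (x : ℝ) :
    (scalar (Fin 3) x - diagRankOneUpdate T S u P Q).det =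
      x * (x + P) * (x - Q) - T * x * (x - Q) - S * x * (x + P) - u * (x + P) * (x - Q) := by
  rw [diagRankOneUpdate, det_scalar_sub_diagonal_add_vecMulVec]
  simp only [Fin.isValue, cons_val_zero, cons_val_one, cons_val, Real.mul_self_sqrt hT,
    Real.mul_self_sqrt hS, Real.mul_self_sqrt hu]
  ring

theorem trace_diagRankOneUpdate (hT : 0 ≤ T) (hS : 0 ≤ S) (hu : 0 ≤ u) :
    (diagRankOneUpdate T S u P Q).trace = T + S + u - P + Q := by
  rw [diagRankOneUpdate, trace_add, trace_diagonal, trace_vecMulVec, dotProduct,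
    Fin.sum_univ_three, Fin.sum_univ_three]
  simp only [Fin.isValue, cons_val_zero, cons_val_one, cons_val, Real.mul_self_sqrt hT,
    Real.mul_self_sqrt hS, Real.mul_self_sqrt hu]
  ring

theorem mul_div_add_mem_Icc_of_charpoly_root (hT : 0 < T) (hS : 0 < S) (hu : 0 < u)
    (hP : 0 < P) (hQ : 0 < Q) {l : ℝ} (hl : l < 0)
    (hroot :
      l * (l + P) * (l - Q) - T * l * (l - Q) - S * l * (l + P) - u * (l + P) * (l - Q) = 0) :
    P * T / (l + P) ∈ Set.Icc u (P + S * (u + T) / u + (u + T)) := by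
  have ha : 0 < -l := neg_pos.mpr hl
  have hb : 0 < Q - l := by linarith
  -- the secular equation `T / (l + P) + S / (l - Q) + u / l = 1`, cleared of denominators
  have hsec : (l + P) * (-l * (Q - l) + S * -l + u * (Q - l)) = T * -l * (Q - l) := by
    linear_combination hroot
  have hy : 0 < l + P := (mul_pos_iff_of_pos_right (by positivity)).mp
    (hsec ▸ mul_pos (mul_pos hT ha) hb)
  have hyu : (l + P) * u ≤ T * -l := by
    refine le_of_mul_le_mul_right ?_ hb
    nlinarith [mul_pos hy (mul_pos ha (add_pos hb hS))]
  have hPa : P * u ≤ (u + T) * -l := by linarith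
  constructor
  · rw [le_div_iff₀ hy]
    nlinarith [mul_pos hT hy]
  · have hsplit : P * T / (l + P) = P + P * S / (Q - l) + u * P / -l := by
      field_simp [hl.ne, hb.ne', hy.ne']
      linear_combination hsec
    rw [hsplit]
    gcongr P + ?_ + ?_
    · rw [div_le_div_iff₀ hb hu]
      nlinarith [mul_le_mul_of_nonneg_left hPa hS.le, mul_pos hS (mul_pos (add_pos hu hT) hQ)]
    · rw [div_le_iff₀ ha]
      linarith

theorem exists_eigenvalue_neg_of_eq_diagRankOneUpdate {A : Matrix (Fin 3) (Fin 3) ℝ}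
    (hA : A.IsHermitian) (hT : 0 < T) (hS : 0 < S) (hu : 0 < u) (hP : 0 < P) (hQ : 0 < Q)
    (hPtr : P < T + S + u + Q) (hAM : A = diagRankOneUpdate T S u P Q) :
    ∃ i₀, hA.eigenvalues i₀ < 0 ∧ (∀ j ≠ i₀, 0 < hA.eigenvalues j) ∧
      P * T / (hA.eigenvalues i₀ + P) ∈ Set.Icc u (P + S * (u + T) / u + (u + T)) := by
  have hchar (x : ℝ) : ∏ i, (x - hA.eigenvalues i) =
      x * (x + P) * (x - Q) - T * x * (x - Q) - S * x * (x + P) - u * (x + P) * (x - Q) := by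
    rw [hA.prod_sub_eigenvalues, hAM, det_scalar_sub_diagRankOneUpdate hT.le hS.le hu.le]
  have hprod : ∏ i, hA.eigenvalues i < 0 := by
    have h0 := hchar 0
    simp only [Fin.prod_univ_three, zero_sub] at h0 ⊢
    nlinarith [mul_pos (mul_pos hu hP) hQ]
  have hsum : 0 < ∑ i, hA.eigenvalues i := by
    rw [hA.sum_eigenvalues_eq_trace, hAM, trace_diagRankOneUpdate hT.le hS.le hu.le]
    linarith
  obtain ⟨i₀, hneg, hpos⟩ := exists_neg_and_pos_of_prod_neg_of_sum_pos hprod hsum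
  refine ⟨i₀, hneg, hpos, mul_div_add_mem_Icc_of_charpoly_root hT hS hu hP hQ hneg ?_⟩
  rw [← hchar]
  exact Finset.prod_eq_zero (Finset.mem_univ i₀) (sub_self _)

theorem exists_sum_abs_eigenvalues_eq_of_eq_diagRankOneUpdate {A : Matrix (Fin 3) (Fin 3) ℝ}
    (hA : A.IsHermitian) (hT : 0 < T) (hS : 0 < S) (hu : 0 < u) (hP : 0 < P) (hQ : 0 < Q)
    (hPtr : P < T + S + u + Q) (hAM : A = diagRankOneUpdate T S u P Q) :
    ∃ y, (Finset.univ.filter (fun i => hA.eigenvalues i < 0)).card = 1 ∧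
      ∑ i, |hA.eigenvalues i| = T + S + u + P + Q - 2 * y ∧
      P * T / y ∈ Set.Icc u (P + S * (u + T) / u + (u + T)) := by
  obtain ⟨i₀, hneg, hpos, hbd⟩ :=
    exists_eigenvalue_neg_of_eq_diagRankOneUpdate hA hT hS hu hP hQ hPtr hAM
  refine ⟨_, card_filter_neg_eq_one hneg fun j hj => (hpos j hj).le, ?_, hbd⟩
  subst hAM
  rw [sum_abs_eq_sum_sub_two_mul hneg.le fun j hj => (hpos j hj).le, hA.sum_eigenvalues_eq_trace,
    trace_diagRankOneUpdate hT.le hS.le hu.le]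
  ring

end DiagRankOneUpdate

theorem tendsto_div_mul_of_mul_div_mem_Icc {α : Type*} {l : Filter α} {P T S u y : α → ℝ}
    (hP : Tendsto P l (𝓝 0)) (hT : Tendsto T l (𝓝 0)) (hS : Tendsto S l (𝓝 0))
    (hu : Tendsto u l (𝓝 1))
    (hy : ∀ᶠ n in l,
      P n * T n / y n ∈ Set.Icc (u n) (P n + S n * (u n + T n) / u n + (u n + T n))) :
    Tendsto (fun n => y n / (P n * T n)) l (𝓝 1) := by
  have hup : Tendsto (fun n => P n + S n * (u n + T n) / u n + (u n + T n)) l (𝓝 1) := by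
    simpa using (hP.add ((hS.mul (hu.add hT)).div hu one_ne_zero)).add (hu.add hT)
  have h := (tendsto_of_tendsto_of_tendsto_of_le_of_le' hu hup (hy.mono fun _ h => h.1)
    (hy.mono fun _ h => h.2)).inv₀ one_ne_zero
  simpa only [inv_div, inv_one] using h

theorem trace_norm_asymptotics_of_A_n
    (p q t s : ℝ)
    (hp : p ∈ Set.Ioo (0 : ℝ) 1) (hq : q ∈ Set.Ioo (0 : ℝ) 1)
    (ht : t ∈ Set.Ioo (0 : ℝ) 1) (hs : s ∈ Set.Ioo (0 : ℝ) 1)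
    (hts : t + s < 1)
    (A : ℕ → Matrix (Fin 3) (Fin 3) ℝ)
    (hAdef : ∀ n, A n =
      !![t ^ n - p ^ n, Real.sqrt ((t * s) ^ n), Real.sqrt (t ^ n * (1 - t ^ n - s ^ n));
         Real.sqrt ((t * s) ^ n), s ^ n + q ^ n, Real.sqrt (s ^ n * (1 - t ^ n - s ^ n));
         Real.sqrt (t ^ n * (1 - t ^ n - s ^ n)), Real.sqrt (s ^ n * (1 - t ^ n - s ^ n)),
           1 - t ^ n - s ^ n])
    (hA : ∀ n, (A n).IsHermitian) :
    (∃ N : ℕ, ∀ n ≥ N,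
      (Finset.univ.filter (fun i => (hA n).eigenvalues i < 0)).card = 1) ∧
    (∃ e : ℕ → ℝ,
      (∀ n, ∑ i, |(hA n).eigenvalues i|
          = 1 + p ^ n + q ^ n - 2 * (p * t) ^ n + e n) ∧
      Filter.Tendsto (fun n => e n / (p * t) ^ n) Filter.atTop (nhds 0)) := by
  obtain ⟨hp0, hp1⟩ := hp
  obtain ⟨hq0, -⟩ := hq
  obtain ⟨ht0, ht1⟩ := ht
  obtain ⟨hs0, hs1⟩ := hs
  have hu (n : ℕ) (hn : 1 ≤ n) : 0 < 1 - t ^ n - s ^ n := by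
    linarith [pow_le_of_le_one ht0.le ht1.le (n := n) (by omega),
      pow_le_of_le_one hs0.le hs1.le (n := n) (by omega)]
  have hspec (n : ℕ) (hn : 1 ≤ n) := exists_sum_abs_eigenvalues_eq_of_eq_diagRankOneUpdate (hA n)
    (pow_pos ht0 n) (pow_pos hs0 n) (hu n hn) (pow_pos hp0 n) (pow_pos hq0 n)
    (by linarith [pow_lt_one₀ hp0.le hp1 (n := n) (by omega), pow_pos hq0 n])
    (by rw [hAdef n, diagRankOneUpdate_eq (pow_pos ht0 n).le (pow_pos hs0 n).le (hu n hn).le,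
      mul_pow])
  choose! y hcard hnorm hbd using hspec
  have hpow {r : ℝ} (h0 : 0 < r) (h1 : r < 1) : Tendsto (fun n : ℕ => r ^ n) atTop (𝓝 0) :=
    tendsto_pow_atTop_nhds_zero_of_lt_one h0.le h1
  have hratio := tendsto_div_mul_of_mul_div_mem_Icc (hpow hp0 hp1) (hpow ht0 ht1) (hpow hs0 hs1)
    (by simpa using (tendsto_const_nhds.sub (hpow ht0 ht1)).sub (hpow hs0 hs1))
    (eventually_atTop.mpr ⟨1, hbd⟩)
  refine ⟨⟨1, hcard⟩, _, fun n => (add_sub_cancel _ _).symm, ?_⟩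
  have hlim := (hratio.const_mul 2).const_sub 2
  rw [mul_one, sub_self] at hlim
  refine hlim.congr' (eventually_atTop.mpr ⟨1, fun n hn => ?_⟩)
  have hpt : (p * t) ^ n ≠ 0 := pow_ne_zero n (mul_pos hp0 ht0).ne'
  dsimp only
  rw [hnorm n hn, ← mul_pow]
  field_simp
  ring
end
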